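/- (Observer convergence with a constant metric.) Let f : ℝⁿ → ℝⁿ be continuously differentiable with Jacobian A(x), B an n×m real matrix, C a p×n real matrix, W symmetric positive definite, λ > 0 and ρ ≥ 0 real, and suppose A(x)ᵀ·W + W·A(x) - ρ·Cᵀ·C ⪯ -2λW for all x ∈ ℝⁿ. Define L = (ρ/2)·W⁻¹·Cᵀ. Let u : [0,∞) → ℝᵐ be continuous, let x solve ẋ = f(x) + B·u(t) with output y(t) = C·x(t), and let x̂ solve the observer equation ẋ̂ = f(x̂) + B·u(t) + L·(y(t) - C·x̂). Then (x̂(t)-x(t))ᵀ·W·(x̂(t)-x(t)) ≤ e^{-2λt}·(x̂(0)-x(0))ᵀ·W·(x̂(0)-x(0)) for all t ≥ 0, so the state estimate converges exponentially to the true state with rate λ. -/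

import Mathlib

/-!
The error `e = x̂ - x` satisfies `ė = f(x̂) - f(x) - L C e`. Along the segment from `x` to `x̂`
the mean value theorem bounds `eᵀW(f(x̂) - f(x))` by `sup_ξ eᵀW A(ξ) e`, which by the matrix
inequality is at most `-λ eᵀWe + (ρ/2)|Ce|²`; the choice of `L` makes `eᵀW L C e = (ρ/2)|Ce|²`
cancel the output term. Hence `V = eᵀWe` satisfies `V' ≤ -2λV`, and Grönwall's inequality
gives `V(t) ≤ e^{-2λt} V(0)`.
-/

open Matrix

variable {ι κ : Type*} [Fintype ι]

theorem HasDerivAt.dotProduct {a b : ℝ → ι → ℝ} {a' b' : ι → ℝ} {t : ℝ}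
    (ha : HasDerivAt a a' t) (hb : HasDerivAt b b' t) :
    HasDerivAt (fun s => a s ⬝ᵥ b s) (a' ⬝ᵥ b t + a t ⬝ᵥ b') t := by
  rw [hasDerivAt_pi] at ha hb
  simp only [_root_.dotProduct, ← Finset.sum_add_distrib]
  exact HasDerivAt.fun_sum fun j _ => (ha j).mul (hb j)

theorem HasDerivAt.mulVec (M : Matrix κ ι ℝ) {c : ℝ → ι → ℝ} {c' : ι → ℝ} {t : ℝ}
    (h : HasDerivAt c c' t) : HasDerivAt (fun s => M *ᵥ c s) (M *ᵥ c') t := by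
  rw [hasDerivAt_pi] at h ⊢
  intro i
  simp only [Matrix.mulVec, _root_.dotProduct]
  exact HasDerivAt.fun_sum fun j _ => (h j).const_mul (M i j)

theorem Matrix.IsSymm.dotProduct_mulVec_comm {W : Matrix ι ι ℝ} (hW : W.IsSymm) (v w : ι → ℝ) :
    v ⬝ᵥ W *ᵥ w = w ⬝ᵥ W *ᵥ v := by
  rw [dotProduct_mulVec, ← mulVec_transpose, hW, dotProduct_comm]

theorem HasDerivAt.dotProduct_mulVec_self {W : Matrix ι ι ℝ} (hW : W.IsSymm)
    {e : ℝ → ι → ℝ} {e' : ι → ℝ} {t : ℝ} (he : HasDerivAt e e' t) :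
    HasDerivAt (fun s => e s ⬝ᵥ W *ᵥ e s) (2 * (e t ⬝ᵥ W *ᵥ e')) t := by
  convert he.dotProduct (he.mulVec W) using 1
  rw [hW.dotProduct_mulVec_comm e', two_mul]

theorem dotProduct_sub_le_of_hasFDerivAt [Fintype κ] [DecidableEq ι] {f : (ι → ℝ) → κ → ℝ}
    {A : (ι → ℝ) → Matrix κ ι ℝ}
    (hf : ∀ x, HasFDerivAt f (toLin' (A x)).toContinuousLinearMap x) (v : κ → ℝ) (a z : ι → ℝ)
    {K : ℝ} (hK : ∀ x, v ⬝ᵥ A x *ᵥ z ≤ K) :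
    v ⬝ᵥ (f (a + z) - f a) ≤ K := by
  have hpath (s : ℝ) : HasDerivAt (fun s : ℝ => a + s • z) z s := by
    simpa using ((hasDerivAt_id s).smul_const z).const_add a
  have hderiv (s : ℝ) :
      HasDerivAt (fun s : ℝ => v ⬝ᵥ f (a + s • z)) (v ⬝ᵥ A (a + s • z) *ᵥ z) s := by
    have hcomp := (hf (a + s • z)).comp_hasDerivAt s (hpath s)
    simpa using (hasDerivAt_const s v).dotProduct hcomp
  have := image_sub_le_mul_sub_of_deriv_le (fun s => (hderiv s).differentiableAt)
    (fun s => (hderiv s).deriv ▸ hK _) zero_le_one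
  simpa [dotProduct_sub] using this

theorem dotProduct_mulVec_mulVec_le_of_posSemidef [Fintype κ] {W A : Matrix ι ι ℝ}
    {C : Matrix κ ι ℝ} {lam ρ : ℝ} (hW : W.IsSymm)
    (hLMI : ((-(2 * lam)) • W - (Aᵀ * W + W * A - ρ • (Cᵀ * C))).PosSemidef) (z : ι → ℝ) :
    z ⬝ᵥ W *ᵥ (A *ᵥ z) ≤ -lam * (z ⬝ᵥ W *ᵥ z) + ρ / 2 * (C *ᵥ z ⬝ᵥ C *ᵥ z) := by
  have h := hLMI.dotProduct_mulVec_nonneg z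
  have hAW : z ⬝ᵥ (Aᵀ * W) *ᵥ z = z ⬝ᵥ W *ᵥ (A *ᵥ z) := by
    rw [← mulVec_mulVec, dotProduct_mulVec z Aᵀ, vecMul_transpose, hW.dotProduct_mulVec_comm,
      dotProduct_comm]
  have hCC : z ⬝ᵥ (Cᵀ * C) *ᵥ z = C *ᵥ z ⬝ᵥ C *ᵥ z := by
    rw [← mulVec_mulVec, dotProduct_mulVec z Cᵀ, vecMul_transpose]
  simp only [star_trivial, sub_mulVec, add_mulVec, smul_mulVec, dotProduct_sub,
    dotProduct_add, dotProduct_smul, smul_eq_mul] at h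
  rw [hAW, hCC, ← mulVec_mulVec] at h
  linarith

theorem dotProduct_mulVec_observer_error_le [Fintype κ] [DecidableEq ι] {f : (ι → ℝ) → ι → ℝ}
    {A : (ι → ℝ) → Matrix ι ι ℝ}
    (hf : ∀ x, HasFDerivAt f (toLin' (A x)).toContinuousLinearMap x)
    {W : Matrix ι ι ℝ} {C : Matrix κ ι ℝ} {L : Matrix ι κ ℝ} {lam ρ : ℝ} (hW : W.IsSymm)
    (hLMI : ∀ x, ((-(2 * lam)) • W - ((A x)ᵀ * W + W * A x - ρ • (Cᵀ * C))).PosSemidef)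
    (hWL : W * L = (ρ / 2) • Cᵀ) (a b : ι → ℝ) :
    (b - a) ⬝ᵥ W *ᵥ (f b - f a - L *ᵥ (C *ᵥ (b - a))) ≤ -lam * ((b - a) ⬝ᵥ W *ᵥ (b - a)) := by
  set z := b - a
  have hmean : z ⬝ᵥ W *ᵥ (f (a + z) - f a) ≤
      -lam * (z ⬝ᵥ W *ᵥ z) + ρ / 2 * (C *ᵥ z ⬝ᵥ C *ᵥ z) := by
    rw [dotProduct_mulVec]
    refine dotProduct_sub_le_of_hasFDerivAt hf _ a z fun x => ?_
    rw [← dotProduct_mulVec]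
    exact dotProduct_mulVec_mulVec_le_of_posSemidef hW (hLMI x) z
  have hgain : z ⬝ᵥ W *ᵥ (L *ᵥ (C *ᵥ z)) = ρ / 2 * (C *ᵥ z ⬝ᵥ C *ᵥ z) := by
    rw [mulVec_mulVec, hWL, smul_mulVec, dotProduct_smul, smul_eq_mul, dotProduct_mulVec z Cᵀ,
      vecMul_transpose]
  rw [add_sub_cancel] at hmean
  rw [mulVec_sub, dotProduct_sub, hgain]
  linarith

theorem le_exp_mul_of_hasDerivAt_le_mul {V V' : ℝ → ℝ} {K : ℝ}
    (hV : ∀ t, 0 ≤ t → HasDerivAt V (V' t) t) (hbound : ∀ t, 0 ≤ t → V' t ≤ K * V t)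
    {t : ℝ} (ht : 0 ≤ t) : V t ≤ Real.exp (K * t) * V 0 := by
  have := le_gronwallBound_of_liminf_deriv_right_le (f' := V') (ε := 0) (b := t)
    (fun s hs => (hV s hs.1).continuousAt.continuousWithinAt)
    (fun s hs _ hr => (hV s hs.1).hasDerivWithinAt.liminf_right_slope_le hr) le_rfl
    (fun s hs => by simpa using hbound s hs.1) t ⟨ht, le_rfl⟩
  rwa [gronwallBound_ε0, sub_zero, mul_comm] at this

theorem observer_convergence_constant_metric_general {n m p : ℕ}
    (f : (Fin n → ℝ) → (Fin n → ℝ))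
    (A : (Fin n → ℝ) → Matrix (Fin n) (Fin n) ℝ)
    (hf : ∀ x : Fin n → ℝ,
      HasFDerivAt f ((Matrix.toLin' (A x)).toContinuousLinearMap) x)
    (B : Matrix (Fin n) (Fin m) ℝ) (C : Matrix (Fin p) (Fin n) ℝ)
    (W : Matrix (Fin n) (Fin n) ℝ) (hW : W.PosDef)
    (lam ρ : ℝ)
    (hLMI : ∀ x : Fin n → ℝ,
      ((-(2 * lam)) • W - ((A x)ᵀ * W + W * A x - ρ • (Cᵀ * C))).PosSemidef)
    (L : Matrix (Fin n) (Fin p) ℝ) (hL : L = (ρ / 2) • (W⁻¹ * Cᵀ))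
    (u : ℝ → (Fin m → ℝ))
    (x xhat : ℝ → (Fin n → ℝ))
    (y : ℝ → (Fin p → ℝ)) (hy : ∀ t : ℝ, y t = C.mulVec (x t))
    (hx : ∀ t : ℝ, 0 ≤ t → HasDerivAt x (f (x t) + B.mulVec (u t)) t)
    (hxhat : ∀ t : ℝ, 0 ≤ t →
      HasDerivAt xhat
        (f (xhat t) + B.mulVec (u t) + L.mulVec (y t - C.mulVec (xhat t))) t) :
    ∀ t : ℝ, 0 ≤ t →
      (xhat t - x t) ⬝ᵥ W.mulVec (xhat t - x t) ≤
        Real.exp (-(2 * lam) * t) * ((xhat 0 - x 0) ⬝ᵥ W.mulVec (xhat 0 - x 0)) := by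
  have hWsymm : W.IsSymm := hW.isHermitian
  have hWL : W * L = (ρ / 2) • Cᵀ := by
    rw [hL, Matrix.mul_smul,
      mul_nonsing_inv_cancel_left W Cᵀ ((isUnit_iff_isUnit_det W).mp hW.isUnit)]
  have herror (t : ℝ) (ht : 0 ≤ t) : HasDerivAt (fun s => xhat s - x s)
      (f (xhat t) - f (x t) - L *ᵥ (C *ᵥ (xhat t - x t))) t := by
    have hdiff : f (xhat t) + B *ᵥ u t + L *ᵥ (y t - C *ᵥ xhat t) - (f (x t) + B *ᵥ u t) =
        f (xhat t) - f (x t) - L *ᵥ (C *ᵥ (xhat t - x t)) := by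
      rw [hy, ← mulVec_sub, ← neg_sub (xhat t), mulVec_neg, mulVec_neg]
      abel
    exact hdiff ▸ (hxhat t ht).sub (hx t ht)
  intro t ht
  refine le_exp_mul_of_hasDerivAt_le_mul
    (fun s hs => (herror s hs).dotProduct_mulVec_self hWsymm) (fun s _ => ?_) ht
  have := dotProduct_mulVec_observer_error_le hf hWsymm hLMI hWL (x s) (xhat s)
  linarith

/-- Observer convergence with a constant metric: if `A(x)ᵀW + WA(x) - ρCᵀC ⪯ -2λW` for
all `x`, then the observer with gain `L = (ρ/2)W⁻¹Cᵀ` converges exponentially to the true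
state with rate `λ`, measured in the metric `W`. -/
theorem observer_convergence_constant_metric {n m p : ℕ}
    (f : (Fin n → ℝ) → (Fin n → ℝ))
    (A : (Fin n → ℝ) → Matrix (Fin n) (Fin n) ℝ)
    (hf : ∀ x : Fin n → ℝ,
      HasFDerivAt f ((Matrix.toLin' (A x)).toContinuousLinearMap) x)
    (hA : Continuous A)
    (B : Matrix (Fin n) (Fin m) ℝ) (C : Matrix (Fin p) (Fin n) ℝ)
    (W : Matrix (Fin n) (Fin n) ℝ) (hW : W.PosDef)
    (lam ρ : ℝ) (hlam : 0 < lam) (hρ : 0 ≤ ρ)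
    (hLMI : ∀ x : Fin n → ℝ,
      ((-(2 * lam)) • W - ((A x)ᵀ * W + W * A x - ρ • (Cᵀ * C))).PosSemidef)
    (L : Matrix (Fin n) (Fin p) ℝ) (hL : L = (ρ / 2) • (W⁻¹ * Cᵀ))
    (u : ℝ → (Fin m → ℝ)) (hu : Continuous u)
    (x xhat : ℝ → (Fin n → ℝ))
    (y : ℝ → (Fin p → ℝ)) (hy : ∀ t : ℝ, y t = C.mulVec (x t))
    (hx : ∀ t : ℝ, 0 ≤ t → HasDerivAt x (f (x t) + B.mulVec (u t)) t)
    (hxhat : ∀ t : ℝ, 0 ≤ t →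
      HasDerivAt xhat
        (f (xhat t) + B.mulVec (u t) + L.mulVec (y t - C.mulVec (xhat t))) t) :
    ∀ t : ℝ, 0 ≤ t →
      (xhat t - x t) ⬝ᵥ W.mulVec (xhat t - x t) ≤
        Real.exp (-(2 * lam) * t) * ((xhat 0 - x 0) ⬝ᵥ W.mulVec (xhat 0 - x 0)) :=
  observer_convergence_constant_metric_general f A hf B C W hW lam ρ hLMI L hL u x xhat y hy hx
    hxhat
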